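/- Let T be a well generated tensor triangulated category with loc(1) = T, and let X, Y be objects of T with homological localization functors L_X and L_Y. Then ⟨X⟩ ≤ ⟨Y⟩ in the Bousfield lattice if and only if L_X = L_X L_Y = L_Y L_X; and in this case the induced surjective lattice maps satisfy the commutativity: the map BL(T) → BL(𝓛_X) induced by L_X equals the composite of the map BL(T) → BL(𝓛_Y) induced by L_Y followed by the map BL(𝓛_Y) → BL(𝓛_X) induced by L_X (and the same holds with BL replaced by DL or BA). -/

import Mathlib

/-! Common framework: tensor triangulated categories, localizing subcategories,
localization functors, Bousfield classes/lattices, and an axiomatization of the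
(p-local) stable homotopy category. -/

set_option linter.unusedSectionVars false

open CategoryTheory CategoryTheory.Limits CategoryTheory.Pretriangulated
open CategoryTheory.MonoidalCategory CategoryTheory.MonoidalClosed ZeroObject

universe w v u v₂ u₂

namespace Paper

/-- A localization functor `(L, η)` on a category: `Lη` is an isomorphism and `Lη = ηL`. -/
structure Localization (D : Type u₂) [Category.{v₂} D] where
  F : D ⥤ D
  η : 𝟭 D ⟶ F
  iso_map : ∀ X : D, IsIso (F.map (η.app X))
  eta_comm : ∀ X : D, F.map (η.app X) = η.app (F.obj X)

/-- The kernel (the class of acyclic objects) of a localization functor. -/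
def Localization.Ker {D : Type u₂} [Category.{v₂} D] (L : Localization D) : Set D :=
  {X : D | IsZero (L.F.obj X)}

/-- An object is local when the localization map `η X : X ⟶ LX` is an isomorphism
(equivalently, it is in the essential image of `L`). -/
def Localization.IsLocalObj {D : Type u₂} [Category.{v₂} D] (L : Localization D) (X : D) : Prop :=
  IsIso (L.η.app X)

/-- A localization functor is smashing when it preserves (set-indexed) coproducts. -/
def IsSmashing {D : Type u₂} [Category.{v₂} D] (L : Localization D) : Prop :=
  ∀ ι : Type v₂, PreservesColimitsOfShape (Discrete ι) L.F

variable (C : Type u) [Category.{v} C] [HasZeroObject C] [Preadditive C]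
  [HasShift C ℤ] [∀ n : ℤ, (shiftFunctor C n).Additive] [Pretriangulated C]
  [MonoidalCategory C] [SymmetricCategory C] [MonoidalClosed C]
  [HasCoproducts.{v} C] [HasCoproducts.{0} C]

/-- A localizing subcategory: a triangulated subcategory closed under retracts and
set-indexed coproducts. -/
structure LocalizingSubcategory where
  P : Set C
  zero_mem : ∀ X : C, IsZero X → X ∈ P
  iso_mem : ∀ {X Y : C}, (X ≅ Y) → X ∈ P → Y ∈ P
  shift_mem : ∀ X : C, X ∈ P → ∀ n : ℤ, X⟦n⟧ ∈ P
  tri_mem : ∀ T ∈ distTriang C, T.obj₁ ∈ P → T.obj₂ ∈ P → T.obj₃ ∈ P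
  retract_mem : ∀ X Y : C, X ∈ P → (∃ (s : Y ⟶ X) (r : X ⟶ Y), s ≫ r = 𝟙 Y) → Y ∈ P
  coprod_mem : ∀ {ι : Type v} (f : ι → C), (∀ i, f i ∈ P) → (∐ f) ∈ P
  coprod_mem₀ : ∀ {ι : Type} (f : ι → C), (∀ i, f i ∈ P) → (∐ f) ∈ P

/-- `loc C A` is the smallest localizing subcategory containing `A`. -/
def loc (A : Set C) : Set C :=
  {X : C | ∀ S : LocalizingSubcategory C, A ⊆ S.P → X ∈ S.P}

/-- A localization functor on a tensor triangulated category: an exact (triangulated)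
localization functor; every object fits in a triangle `CX ⟶ X ⟶ LX` with `CX` acyclic. -/
structure LocalizationFunctor extends Localization C where
  commShift : toLocalization.F.CommShift ℤ
  triangulated : ∀ T ∈ distTriang C,
    (letI := commShift; toLocalization.F.mapTriangle.obj T) ∈ distTriang C
  acyclic_triangle : ∀ X : C, ∃ (A : C) (i : A ⟶ X) (w : toLocalization.F.obj X ⟶ A⟦(1 : ℤ)⟧),
    (Triangle.mk i (toLocalization.η.app X) w ∈ distTriang C) ∧ IsZero (toLocalization.F.obj A)

/-- The canonical map `F(X, 1) ⊗ Y ⟶ F(X, Y)`. -/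
noncomputable def dualComparison (X Y : C) :
    ((ihom X).obj (𝟙_ C)) ⊗ Y ⟶ (ihom X).obj Y :=
  MonoidalClosed.curry ((α_ X ((ihom X).obj (𝟙_ C)) Y).inv ≫
    (((ihom.ev X).app (𝟙_ C)) ▷ Y) ≫ (λ_ Y).hom)

/-- `X` is strongly dualizable if the canonical map `DX ⊗ Y ⟶ F(X,Y)` is an
isomorphism for every `Y`. -/
def StronglyDualizable (X : C) : Prop :=
  ∀ Y : C, IsIso (dualComparison C X Y)

/-- `X` is `α`-small if any map from `X` to a coproduct factors through a
subcoproduct indexed by a set of cardinality `< α`. -/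
def IsAlphaSmall (α : Cardinal.{v}) (X : C) : Prop :=
  ∀ {ι : Type v} (Y : ι → C) (f : X ⟶ ∐ Y),
    ∃ J : Set ι, Cardinal.mk J < α ∧
      ∃ g : X ⟶ ∐ (fun j : J => Y j.1), g ≫ Sigma.desc (fun j => Sigma.ι Y j.1) = f

/-- Compact (= `ℵ₀`-small) objects. -/
def IsCompactObj (X : C) : Prop := IsAlphaSmall C Cardinal.aleph0 X

/-- A perfect generating set in the sense of Krause. -/
def IsPerfectGeneratingSet (G : Set C) : Prop :=
  (∀ X : C, (∀ g ∈ G, ∀ (n : ℤ) (f : g⟦n⟧ ⟶ X), f = 0) → IsZero X) ∧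
  (∀ {ι : Type v} (X Y : ι → C) (f : ∀ i, X i ⟶ Y i),
    (∀ (i : ι), ∀ g ∈ G, ∀ h : g ⟶ Y i, ∃ h' : g ⟶ X i, h' ≫ f i = h) →
    ∀ g ∈ G, ∀ h : g ⟶ ∐ Y, ∃ h' : g ⟶ ∐ X, h' ≫ Limits.Sigma.map f = h)

/-- A triangulated category is well generated if it admits a set of `α`-small
perfect generators for some regular cardinal `α`. -/
def WellGenerated : Prop :=
  ∃ α : Cardinal.{v}, α.IsRegular ∧
    ∃ G : Set C, IsPerfectGeneratingSet C G ∧ ∀ g ∈ G, IsAlphaSmall C α g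

/-- The Bousfield class of `Z` : all objects smashing with `Z` to zero. -/
def BClass (Z : C) : Set C := {W : C | IsZero (W ⊗ Z)}

/-- `⟨X⟩` belongs to the distributive lattice `DL` when `⟨X ⊗ X⟩ = ⟨X⟩`. -/
def MemDL (X : C) : Prop := BClass C (X ⊗ X) = BClass C X

/-- `⟨X⟩` is complemented: there is `Xᶜ` with `⟨X ⊗ Xᶜ⟩ = ⟨0⟩` and `⟨X ⨿ Xᶜ⟩ = ⟨1⟩`. -/
def MemBA (X : C) : Prop :=
  ∃ Xc : C, BClass C (X ⊗ Xc) = BClass C (0 : C) ∧ BClass C (X ⨿ Xc) = BClass C (𝟙_ C)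

section LocalCategory

variable {C}

/-- The category of `L`-local objects (as a full subcategory). -/
abbrev LocalCat (L : Localization C) := ObjectProperty.FullSubcategory (fun X : C => L.IsLocalObj X)

lemma isLocalObj_obj (L : Localization C) (X : C) : L.IsLocalObj (L.F.obj X) := by
  unfold Localization.IsLocalObj
  rw [← L.eta_comm X]
  exact L.iso_map X

/-- The localization of an object, as an object of the local category. -/
def Lobj (L : Localization C) (X : C) : LocalCat L := ⟨L.F.obj X, isLocalObj_obj L X⟩

/-- The Bousfield class of `Z` computed in the category of `L`-local objects,
where the smash product is `W ∧_𝓛 Z = L(W ⊗ Z)`. -/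
def LBCl (L : Localization C) (Z : C) : Set (LocalCat L) :=
  {W : LocalCat L | IsZero (L.F.obj (W.obj ⊗ Z))}

/-- Membership in `DL` of the local category: `⟨Z ∧_𝓛 Z⟩ = ⟨Z⟩`. -/
def MemDLloc (L : Localization C) (Z : C) : Prop :=
  LBCl L (L.F.obj (Z ⊗ Z)) = LBCl L Z

/-- Complemented Bousfield classes in the local category. -/
def MemBAloc (L : Localization C) (Z : C) : Prop :=
  ∃ W : LocalCat L, LBCl L (L.F.obj (Z ⊗ W.obj)) = LBCl L (0 : C) ∧
    LBCl L (L.F.obj (Z ⨿ W.obj)) = LBCl L (L.F.obj (𝟙_ C))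

/-- A localizing subcategory of the category of `L`-local objects: closed under
(local) isomorphisms, shifts, triangles, retracts and (local) coproducts. -/
structure LocalizingIn (L : Localization C) where
  P : Set (LocalCat L)
  zero_mem : ∀ X : LocalCat L, IsZero X → X ∈ P
  iso_mem : ∀ {X Y : LocalCat L}, (X ≅ Y) → X ∈ P → Y ∈ P
  shift_mem : ∀ X : LocalCat L, X ∈ P → ∀ n : ℤ, Lobj L ((X.obj)⟦n⟧) ∈ P
  tri_mem : ∀ T ∈ distTriang C, ∀ (h₁ : L.IsLocalObj T.obj₁) (h₂ : L.IsLocalObj T.obj₂),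
    (⟨T.obj₁, h₁⟩ : LocalCat L) ∈ P → (⟨T.obj₂, h₂⟩ : LocalCat L) ∈ P → Lobj L T.obj₃ ∈ P
  retract_mem : ∀ X Y : LocalCat L, X ∈ P →
    (∃ (s : Y ⟶ X) (r : X ⟶ Y), s ≫ r = 𝟙 Y) → Y ∈ P
  coprod_mem : ∀ {ι : Type v} (f : ι → LocalCat L), (∀ i, f i ∈ P) →
    Lobj L (∐ fun i => (f i).obj) ∈ P
  coprod_mem₀ : ∀ {ι : Type} (f : ι → LocalCat L), (∀ i, f i ∈ P) →
    Lobj L (∐ fun i => (f i).obj) ∈ P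

/-- The smallest localizing subcategory of the local category containing `A`. -/
def locIn (L : Localization C) (A : Set (LocalCat L)) : Set (LocalCat L) :=
  {X : LocalCat L | ∀ S : LocalizingIn L, A ⊆ S.P → X ∈ S.P}

/-- Tensoring (in the local category) with a fixed local object `W`:
`Y ↦ L(W ⊗ Y)`. -/
def tensorL (L : Localization C) (W : LocalCat L) : LocalCat L ⥤ LocalCat L where
  obj Y := Lobj L (W.obj ⊗ Y.obj)
  map {Y Y'} f := ObjectProperty.homMk (L.F.map (W.obj ◁ f.hom))
  map_id Y := by
    ext
    simp [ObjectProperty.homMk, Lobj]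
  map_comp {Y Y' Y''} f g := by
    ext
    simp [ObjectProperty.homMk, Lobj]

/-- An object `W` of the local category is strongly dualizable if tensoring with `W`
admits a right adjoint given by tensoring with some (dual) object `D`; equivalently,
the canonical map `F(W,L1) ∧ Y ⟶ F(W,Y)` is an isomorphism for all local `Y`. -/
def StronglyDualizableIn (L : Localization C) (W : LocalCat L) : Prop :=
  ∃ D : LocalCat L, Nonempty (tensorL L W ⊣ tensorL L D)

/-- Compactness in the local category: maps into local coproducts `L(∐ Yᵢ)`
factor through finite subcoproducts. -/
def IsCompactIn (L : Localization C) (X : LocalCat L) : Prop :=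
  ∀ {ι : Type v} (Y : ι → LocalCat L) (f : X.obj ⟶ L.F.obj (∐ fun i => (Y i).obj)),
    ∃ J : Set ι, Cardinal.mk J < Cardinal.aleph0 ∧
      ∃ g : X.obj ⟶ L.F.obj (∐ fun j : J => (Y j.1).obj),
        g ≫ L.F.map (Sigma.desc fun j => Sigma.ι (fun i => (Y i).obj) j.1) = f

/-- There are no square-zero objects in the `L`-local category. -/
def NoSquareZero (L : Localization C) : Prop :=
  ∀ W : LocalCat L, ¬ IsZero W → ¬ IsZero (L.F.obj (W.obj ⊗ W.obj))

end LocalCategory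

/-- The Generalized Smashing Conjecture: every smashing localization is generated
by a set of compact objects. -/
def GSC : Prop :=
  ∀ L : LocalizationFunctor C, IsSmashing L.toLocalization →
    ∃ A : Set C, (∀ a ∈ A, IsCompactObj C a) ∧ L.toLocalization.Ker = loc C A

/-- The Strongly Dualizable Generalized Smashing Conjecture: every smashing
localization is generated by a set of strongly dualizable objects. -/
def SDGSC : Prop :=
  ∀ L : LocalizationFunctor C, IsSmashing L.toLocalization →
    ∃ A : Set C, (∀ a ∈ A, StronglyDualizable C a) ∧ L.toLocalization.Ker = loc C A

/-- The GSC for the category of `L`-local objects. -/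
def GSCIn (L : Localization C) : Prop :=
  ∀ l : Localization (LocalCat L), IsSmashing l →
    ∃ A : Set (LocalCat L), (∀ a ∈ A, IsCompactIn L a) ∧ l.Ker = locIn L A

/-- The SDGSC for the category of `L`-local objects. -/
def SDGSCIn (L : Localization C) : Prop :=
  ∀ l : Localization (LocalCat L), IsSmashing l →
    ∃ A : Set (LocalCat L), (∀ a ∈ A, StronglyDualizableIn L a) ∧ l.Ker = locIn L A

section Telescope

/-- The sequential diagram `X ⟶ Σ^{-d} X ⟶ Σ^{-2d} X ⟶ ⋯` obtained by iterating a
self-map `f : Σ^d X ⟶ X`. -/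
noncomputable def telescopeDiagram (X : C) (d : ℤ) (f : (shiftFunctor C d).obj X ⟶ X) :
    ℕ ⥤ C :=
  Functor.ofSequence (X := fun i : ℕ => (shiftFunctor C (-(d * (i : ℤ)))).obj X)
    (fun i => (shiftFunctorAdd' C d (-(d * ((i : ℕ) + 1 : ℕ))) (-(d * (i : ℤ)))
        (by push_cast; ring)).hom.app X ≫
      (shiftFunctor C (-(d * ((i : ℕ) + 1 : ℕ)))).map f)

/-- `tel` is a telescope (sequential homotopy colimit) of the self-map `f` on `X`. -/
def IsTelescope (X : C) (d : ℤ) (f : (shiftFunctor C d).obj X ⟶ X) (tel : C) : Prop :=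
  ∃ c : Cocone (telescopeDiagram C X d f), Nonempty (IsColimit c) ∧ Nonempty (c.pt ≅ tel)

/-- `X` is a finite (compact) spectrum of type `n`, with respect to the Morava
K-theories `K`. -/
def IsTypeN (K : ℕ → C) (n : ℕ) (X : C) : Prop :=
  IsCompactObj C X ∧ (∀ j : ℕ, j < n → IsZero (X ⊗ K j)) ∧ ¬ IsZero (X ⊗ K n)

/-- `f : Σ^d X ⟶ X` is a `v_n` self-map: it induces an isomorphism on `K(n)`-homotopy
and zero on `K(m)`-homotopy for `m ≠ n`. -/
def IsVnSelfMap (K : ℕ → C) (n : ℕ) (X : C) (d : ℤ) (f : (shiftFunctor C d).obj X ⟶ X) :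
    Prop :=
  (∀ i : ℤ, Function.Bijective
      (fun g : (𝟙_ C)⟦i⟧ ⟶ K n ⊗ (shiftFunctor C d).obj X => g ≫ (K n ◁ f))) ∧
  (∀ m : ℕ, m ≠ n → ∀ (j : ℤ) (g : (𝟙_ C)⟦j⟧ ⟶ K m ⊗ (shiftFunctor C d).obj X),
    g ≫ (K m ◁ f) = 0)

/-- A skew field object: a nonzero ring object all of whose module objects are
coproducts of suspensions of it. -/
def IsSkewField (A : Mon C) : Prop :=
  ¬ IsZero A.X ∧
    ∀ M : CategoryTheory.Mod C A.X, ∃ (ι : Type v) (m : ι → ℤ), Nonempty (M.X ≅ ∐ fun i => (A.X)⟦m i⟧)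

end Telescope

/-- An axiomatization of the `p`-local stable homotopy category: a monogenic well
generated tensor triangulated category equipped with the Morava K-theories `K(n)`,
generic finite type-`n` spectra `F(n)`, telescopes `T(n)`, Johnson-Wilson spectra
`E(n)`, the Eilenberg-MacLane spectrum `HF_p`, and the Brown-Comenetz dual `I` of
the sphere, together with their standard properties. -/
structure SHContext where
  monogenic : loc C {(𝟙_ C)} = Set.univ
  wellGen : WellGenerated C
  /-- The Morava K-theories, as ring objects. -/
  Kring : ℕ → Mon C
  Kfield : ∀ n, IsSkewField C (Kring n)
  Kperp : ∀ m n, m ≠ n → IsZero ((Kring m).X ⊗ (Kring n).X)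
  /-- Generic finite type-`n` spectra. -/
  F : ℕ → C
  Fdual : ∀ n, StronglyDualizable C (F n)
  Ftype : ∀ n, IsTypeN C (fun i => (Kring i).X) n (F n)
  Fzero : BClass C (F 0) = BClass C (𝟙_ C)
  /-- The telescopes `T(n)`. -/
  T : ℕ → C
  Ttel : ∀ n, ∃ (d : ℤ) (f : (shiftFunctor C d).obj (F n) ⟶ F n),
    IsVnSelfMap C (fun i => (Kring i).X) n (F n) d f ∧ IsTelescope C (F n) d f (T n)
  TK : ∀ m n, m ≠ n → IsZero (T m ⊗ (Kring n).X)
  TKself : ∀ n, ¬ IsZero (T n ⊗ (Kring n).X)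
  TT : ∀ m n, m ≠ n → IsZero (T m ⊗ T n)
  KleT : ∀ n, BClass C (T n) ⊆ BClass C ((Kring n).X)
  FT : ∀ m n, m > n → IsZero (F m ⊗ T n)
  FTeq : ∀ m n, m ≤ n → BClass C (F m ⊗ T n) = BClass C (T n)
  /-- The Johnson-Wilson spectra `E(n)`, with `⟨E(n)⟩ = ⟨K(0) ∨ ⋯ ∨ K(n)⟩`. -/
  E : ℕ → C
  Eclass : ∀ n, BClass C (E n) = BClass C (∐ fun i : Fin (n + 1) => (Kring i.1).X)
  /-- The mod-`p` Eilenberg-MacLane spectrum, a skew field object. -/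
  HFp : Mon C
  HFpfield : IsSkewField C HFp
  KHFp : ∀ n, IsZero ((Kring n).X ⊗ HFp.X)
  THFp : ∀ n, IsZero (T n ⊗ HFp.X)
  /-- The Brown-Comenetz dual of the sphere. -/
  I : C
  Inonzero : ¬ IsZero I
  Isquare : IsZero (I ⊗ I)
  IleHFp : BClass C HFp.X ⊆ BClass C I
  TI : ∀ n, IsZero (T n ⊗ I)
  KI : ∀ n, IsZero ((Kring n).X ⊗ I)
  FI : ∀ n, ¬ IsZero (F n ⊗ I)

section Conjectures

variable {C : Type u} [Category.{v} C] [HasZeroObject C] [Preadditive C]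
  [HasShift C ℤ] [∀ n : ℤ, (shiftFunctor C n).Additive] [Pretriangulated C]
  [MonoidalCategory C] [SymmetricCategory C] [MonoidalClosed C]
  [HasCoproducts.{v} C] [HasCoproducts.{0} C]

/-- `TC1_n` : `⟨T(n)⟩ = ⟨K(n)⟩`. -/
def TC1 (ctx : SHContext C) (n : ℕ) : Prop :=
  BClass C (ctx.T n) = BClass C ((ctx.Kring n).X)

/-- `TC3_n` : if `X` is type `n` and `f` is a `v_n` self-map, then `L_n X ≅ f⁻¹X`. -/
def TC3 (ctx : SHContext C) (Ln : Localization C) (n : ℕ) : Prop :=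
  ∀ (X : C) (d : ℤ) (f : (shiftFunctor C d).obj X ⟶ X) (tel : C),
    IsTypeN C (fun i => (ctx.Kring i).X) n X →
    IsVnSelfMap C (fun i => (ctx.Kring i).X) n X d f →
    IsTelescope C X d f tel →
    Nonempty (Ln.F.obj X ≅ tel)

/-- `LTC1_n` : `⟨LT(n)⟩ = ⟨LK(n)⟩` in the Bousfield lattice of the local category. -/
def LTC1 (L : Localization C) (ctx : SHContext C) (n : ℕ) : Prop :=
  LBCl L (L.F.obj (ctx.T n)) = LBCl L (L.F.obj ((ctx.Kring n).X))

/-- `LTC3_n` : if `X` is type `n` with `v_n` self-map `f` and telescope `f⁻¹X`, then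
`l_n (LX) ≅ L(f⁻¹X)`. -/
def LTC3 (L : Localization C) (ctx : SHContext C) (ln : Localization (LocalCat L))
    (n : ℕ) : Prop :=
  ∀ (X : C) (d : ℤ) (f : (shiftFunctor C d).obj X ⟶ X) (tel : C),
    IsTypeN C (fun i => (ctx.Kring i).X) n X →
    IsVnSelfMap C (fun i => (ctx.Kring i).X) n X d f →
    IsTelescope C X d f tel →
    Nonempty ((ln.F.obj (Lobj L X)).obj ≅ L.F.obj tel)

/-- The support of a local object `W` : those `i` with `W ∧ K(i) ≠ 0` (local smash). -/
def suppIn (L : Localization C) (K : ℕ → C) (W : C) : Set ℕ :=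
  {i : ℕ | ¬ IsZero (L.F.obj (W ⊗ K i))}

/-- The support of a local object `W`, as a subset of `{0, 1, …, n}`. -/
def suppFin (L : Localization C) (n : ℕ) (K : ℕ → C) (W : C) : Set (Fin (n + 1)) :=
  {i : Fin (n + 1) | ¬ IsZero (L.F.obj (W ⊗ K i.1))}

end Conjectures

section AuxStatement5

variable {C}

/-- Shifts of acyclic objects are acyclic. -/
lemma shift_acyclic_aux (L : LocalizationFunctor C) {A : C}
    (hA : IsZero (L.toLocalization.F.obj A)) (n : ℤ) :
    IsZero (L.toLocalization.F.obj (A⟦n⟧)) := by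
  letI := L.commShift
  have e : L.toLocalization.F.obj (A⟦n⟧) ≅ (L.toLocalization.F.obj A)⟦n⟧ :=
    (L.toLocalization.F.commShiftIso n).app A
  exact ((shiftFunctor C n).map_isZero hA).of_iso e

/-- Orthogonality: any map from an `L`-acyclic object to an `L`-local object is zero. -/
lemma hom_zero_of_acyclic_local_aux (L : Localization C) {A Z : C}
    (hA : IsZero (L.F.obj A)) (hZ : L.IsLocalObj Z) (f : A ⟶ Z) : f = 0 := by
  haveI : IsIso (L.η.app Z) := hZ
  have hnat := L.η.naturality f
  have hLf : L.F.map f = 0 := hA.eq_of_src _ _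
  have h0 : f ≫ L.η.app Z = 0 := by
    have heq : f ≫ L.η.app Z = L.η.app A ≫ L.F.map f := by simpa using hnat
    rw [heq, hLf, comp_zero]
  rw [← cancel_mono (L.η.app Z), h0, zero_comp]

/-- If all maps from acyclics into `Z` vanish, then `η Z` is an isomorphism. -/
lemma eta_iso_of_orthogonal_aux (L : LocalizationFunctor C) (Z : C)
    (h : ∀ A : C, IsZero (L.toLocalization.F.obj A) → ∀ f : A ⟶ Z, f = 0) :
    IsIso (L.toLocalization.η.app Z) := by
  obtain ⟨A, i, w, hT, hA⟩ := L.acyclic_triangle Z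
  set T := Triangle.mk i (L.toLocalization.η.app Z) w with hTdef
  have hi : T.mor₁ = 0 := h A hA i
  obtain ⟨r, hr⟩ := Triangle.yoneda_exact₂ T hT (𝟙 Z) (by erw [hi, zero_comp])
  -- hr : 𝟙 Z = T.mor₂ ≫ r
  have hq : T.mor₂ ≫ (𝟙 T.obj₃ - r ≫ T.mor₂) = 0 := by
    erw [Preadditive.comp_sub, Category.comp_id, ← Category.assoc, ← hr,
      show (𝟙 Z : Z ⟶ Z) ≫ T.mor₂ = T.mor₂ from Category.id_comp _, sub_self]
  obtain ⟨s, hs⟩ := Triangle.yoneda_exact₃ T hT (𝟙 T.obj₃ - r ≫ T.mor₂) hq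
  have hs0 : s = 0 :=
    hom_zero_of_acyclic_local_aux L.toLocalization (shift_acyclic_aux L hA 1)
      (isLocalObj_obj L.toLocalization Z) s
  have hri : r ≫ T.mor₂ = 𝟙 T.obj₃ := by
    have h5 : 𝟙 T.obj₃ - r ≫ T.mor₂ = 0 := by rw [hs, hs0, comp_zero]
    exact (sub_eq_zero.mp h5).symm
  exact ⟨r, hr.symm, hri⟩

/-- A localization functor kills zero objects. -/
lemma zero_acyclic_aux (L : LocalizationFunctor C) {Z : C} (hZ : IsZero Z) :
    IsZero (L.toLocalization.F.obj Z) := by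
  haveI := eta_iso_of_orthogonal_aux L Z (fun A _ f => hZ.eq_of_tgt f 0)
  exact hZ.of_iso (asIso (L.toLocalization.η.app Z)).symm

/-- If `LY`-acyclics are `LX`-acyclic, then `LX (η_Y W)` is an isomorphism. -/
lemma isIso_map_eta_aux (LX LY : LocalizationFunctor C)
    (hsub : ∀ A : C, IsZero (LY.toLocalization.F.obj A) → IsZero (LX.toLocalization.F.obj A))
    (W : C) : IsIso (LX.toLocalization.F.map (LY.toLocalization.η.app W)) := by
  obtain ⟨A, i, w, hT, hA⟩ := LY.acyclic_triangle W
  letI := LX.commShift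
  have hT' := LX.triangulated _ hT
  have h0 : IsZero ((LX.toLocalization.F.mapTriangle.obj
      (Triangle.mk i (LY.toLocalization.η.app W) w)).obj₁) := hsub A hA
  exact (Triangle.isZero₁_iff_isIso₂ _ hT').1 h0

end AuxStatement5

/-- `⟨X⟩ ≤ ⟨Y⟩` iff `L_X = L_X L_Y = L_Y L_X`, and in that case the
induced lattice maps commute: the map `BL(T) → BL(𝓛_X)` equals the composite
`BL(T) → BL(𝓛_Y) → BL(𝓛_X)` (likewise on `DL` and `BA`). -/
theorem statement5 (hwg : WellGenerated C) (hmono : loc C {(𝟙_ C)} = Set.univ)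
    (X Y : C) (LX LY : LocalizationFunctor C)
    (hX : LX.toLocalization.Ker = BClass C X) (hY : LY.toLocalization.Ker = BClass C Y) :
    (BClass C Y ⊆ BClass C X ↔
      (Nonempty (LY.toLocalization.F ⋙ LX.toLocalization.F ≅ LX.toLocalization.F) ∧
       Nonempty (LX.toLocalization.F ⋙ LY.toLocalization.F ≅ LX.toLocalization.F))) ∧
    (BClass C Y ⊆ BClass C X → ∀ W : C,
      LBCl LX.toLocalization (LX.toLocalization.F.obj W)
        = LBCl LX.toLocalization (LX.toLocalization.F.obj (LY.toLocalization.F.obj W))) := by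
  -- Translate the Bousfield class inclusion into an inclusion of kernels.
  have kerdef : ∀ (hsub : BClass C Y ⊆ BClass C X) (A : C),
      IsZero (LY.toLocalization.F.obj A) → IsZero (LX.toLocalization.F.obj A) := by
    intro hsub A hA
    have h1 : A ∈ LY.toLocalization.Ker := hA
    rw [hY] at h1
    have h2 : A ∈ LX.toLocalization.Ker := by rw [hX]; exact hsub h1
    exact h2
  constructor
  · constructor
    · intro hsub
      have hsub' := kerdef hsub
      constructor
      · -- `L_Y ⋙ L_X ≅ L_X`
        let τ : 𝟭 C ⋙ LX.toLocalization.F ⟶ LY.toLocalization.F ⋙ LX.toLocalization.F :=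
          Functor.whiskerRight LY.toLocalization.η LX.toLocalization.F
        haveI : ∀ W : C, IsIso (τ.app W) := fun W => isIso_map_eta_aux LX LY hsub' W
        haveI : IsIso τ := NatIso.isIso_of_isIso_app τ
        exact ⟨(asIso τ).symm ≪≫ Functor.leftUnitor _⟩
      · -- `L_X ⋙ L_Y ≅ L_X`
        let τ : LX.toLocalization.F ⋙ 𝟭 C ⟶ LX.toLocalization.F ⋙ LY.toLocalization.F :=
          Functor.whiskerLeft LX.toLocalization.F LY.toLocalization.η
        haveI : ∀ W : C, IsIso (τ.app W) := by
          intro W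
          have : IsIso (LY.toLocalization.η.app (LX.toLocalization.F.obj W)) := by
            apply eta_iso_of_orthogonal_aux
            intro A hA f
            exact hom_zero_of_acyclic_local_aux LX.toLocalization (hsub' A hA)
              (isLocalObj_obj LX.toLocalization W) f
          exact this
        haveI : IsIso τ := NatIso.isIso_of_isIso_app τ
        exact ⟨(asIso τ).symm ≪≫ Functor.rightUnitor _⟩
    · rintro ⟨⟨e₁⟩, -⟩ W hW
      have h1 : W ∈ LY.toLocalization.Ker := by rw [hY]; exact hW
      have h2 : IsZero (LX.toLocalization.F.obj (LY.toLocalization.F.obj W)) :=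
        zero_acyclic_aux LX h1
      have h3 : IsZero (LX.toLocalization.F.obj W) := h2.of_iso (e₁.symm.app W)
      have h4 : W ∈ LX.toLocalization.Ker := h3
      rw [hX] at h4
      exact h4
  · intro hsub W
    have hsub' := kerdef hsub
    haveI := isIso_map_eta_aux LX LY hsub' W
    have φ : LX.toLocalization.F.obj W ≅ LX.toLocalization.F.obj (LY.toLocalization.F.obj W) :=
      asIso (LX.toLocalization.F.map (LY.toLocalization.η.app W))
    ext W'
    simp only [LBCl, Set.mem_setOf_eq]
    constructor
    · intro h
      exact h.of_iso (LX.toLocalization.F.mapIso (whiskerLeftIso W'.obj φ)).symm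
    · intro h
      exact h.of_iso (LX.toLocalization.F.mapIso (whiskerLeftIso W'.obj φ))

end Paper
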